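/- arXiv:2212.04907 — 2 statements merged into one kernel-verified Lean document; each statement's English description precedes it below -/
import Mathlib

section
/- For Re s > 1, ζ(s) = (1/(1-2^{1-s})) ∑_{n=0}^∞ (1/2^{n+1}) ∑_{k=0}^n C(n,k) (-1)^k/(k+1)^s (Hasse's formula). -/
/-!
The alternating series `η(s) = ∑ (-1)^k / (k+1)^s` equals `(1 - 2^(1-s)) ζ(s)`, because the
odd-indexed terms of the zeta series add up to `2^(-s) ζ(s)`. Hasse's series is the Euler
transform of `η`: spread each term `a k` along the row `(k, m)` with the weights
`C(m+k, k) / 2^(m+k+1)`, which sum to `1` by the negative binomial series. The resulting double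
series converges absolutely, and summing it along the antidiagonals `k + m = n` instead gives
`2^(-(n+1)) ∑ₖ C(n, k) a k`.
-/

open Finset

theorem HasSum.sum_antidiagonal {α A : Type*} [AddCommMonoid α] [TopologicalSpace α]
    [ContinuousAdd α] [RegularSpace α] [AddMonoid A] [HasAntidiagonal A]
    {f : A × A → α} {a : α} (hf : HasSum f a) :
    HasSum (fun n ↦ ∑ p ∈ antidiagonal n, f p) a := by
  refine (HasAntidiagonal.sigmaAntidiagonalEquivProd.hasSum_iff.mpr hf).sigma fun n ↦ ?_
  rw [← sum_finset_coe]
  exact hasSum_fintype _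

lemma hasSum_choose_add_div_two_pow (k : ℕ) :
    HasSum (fun m : ℕ ↦ ((m + k).choose k : ℝ) / 2 ^ (m + k + 1)) 1 := by
  have h := (hasSum_choose_mul_geometric_of_norm_lt_one (𝕜 := ℝ) k
    (r := 1 / 2) (by norm_num)).div_const (2 ^ (k + 1))
  rw [show (1 : ℝ) / (1 - 1 / 2) ^ (k + 1) / 2 ^ (k + 1) = 1 by
    rw [show (1 : ℝ) - 1 / 2 = 1 / 2 by norm_num, div_pow, one_pow]; field_simp] at h
  refine h.congr_fun fun m ↦ ?_
  rw [add_assoc, pow_add, div_pow, one_pow]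
  field_simp

theorem hasSum_euler_transform {E : Type*} [NormedAddCommGroup E] [NormedSpace ℝ E]
    [CompleteSpace E] {a : ℕ → E} (ha : Summable (‖a ·‖)) :
    HasSum (fun n ↦ (2 ^ (n + 1) : ℝ)⁻¹ • ∑ k ∈ range (n + 1), n.choose k • a k) (∑' k, a k) := by
  set w : ℕ → ℕ → ℝ := fun k m ↦ ((m + k).choose k : ℝ) / 2 ^ (m + k + 1)
  set F : ℕ × ℕ → E := fun p ↦ w p.1 p.2 • a p.1
  have hrow (k : ℕ) : HasSum (fun m ↦ F (k, m)) (a k) := by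
    simpa using (hasSum_choose_add_div_two_pow k).smul_const (a k)
  have hrow_norm (k : ℕ) : HasSum (fun m ↦ ‖F (k, m)‖) ‖a k‖ := by
    have h := (hasSum_choose_add_div_two_pow k).mul_right ‖a k‖
    rw [one_mul] at h
    refine h.congr_fun fun m ↦ ?_
    rw [norm_smul, Real.norm_of_nonneg (by positivity)]
  have hF : Summable F := by
    refine Summable.of_norm <| (summable_prod_of_nonneg fun _ ↦ norm_nonneg _).2
      ⟨fun k ↦ (hrow_norm k).summable, ha.congr fun k ↦ (hrow_norm k).tsum_eq.symm⟩
  have hsum : HasSum F (∑' k, a k) := by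
    rw [← tsum_congr fun k ↦ (hrow k).tsum_eq, ← hF.tsum_prod' fun k ↦ (hrow k).summable]
    exact hF.hasSum
  refine hsum.sum_antidiagonal.congr_fun fun n ↦ ?_
  rw [Nat.sum_antidiagonal_eq_sum_range_succ_mk, smul_sum]
  refine sum_congr rfl fun k hk ↦ ?_
  have hkn : n - k + k = n := Nat.sub_add_cancel (Nat.lt_succ_iff.mp (mem_range.mp hk))
  simp only [F, w, hkn, ← Nat.cast_smul_eq_nsmul ℝ, smul_smul]
  congr 1
  ring

theorem HasSum.neg_one_pow_mul {R : Type*} [Ring R] [UniformSpace R] [IsUniformAddGroup R]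
    [CompleteSpace R] [T2Space R] {f : ℕ → R} {a b : R} (hf : HasSum f a)
    (hodd : HasSum (fun k ↦ f (2 * k + 1)) b) :
    HasSum (fun k ↦ (-1) ^ k * f k) (a - 2 * b) := by
  have heven : HasSum (fun k ↦ f (2 * k)) (a - b) := by
    have he := (hf.summable.comp_injective (mul_right_injective₀ (two_ne_zero' ℕ))).hasSum
    rwa [← (he.even_add_odd hodd).unique hf, add_sub_cancel_right]
  rw [show a - 2 * b = a - b + -b by rw [two_mul]; abel]
  refine HasSum.even_add_odd (heven.congr_fun fun k ↦ ?_) (hodd.neg.congr_fun fun k ↦ ?_)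
  · simp [pow_mul]
  · simp [pow_succ, pow_mul]

lemma hasSum_one_div_nat_add_one_cpow {s : ℂ} (hs : 1 < s.re) :
    HasSum (fun n : ℕ ↦ 1 / ((n : ℂ) + 1) ^ s) (riemannZeta s) := by
  have h : Summable (fun n : ℕ ↦ 1 / ((n : ℂ) + 1) ^ s) := by
    simpa using (summable_nat_add_iff 1).mpr (Complex.summable_one_div_nat_cpow.mpr hs)
  exact zeta_eq_tsum_one_div_nat_add_one_cpow hs ▸ h.hasSum

lemma one_sub_two_cpow_one_sub_ne_zero {s : ℂ} (hs : 1 < s.re) : 1 - (2 : ℂ) ^ (1 - s) ≠ 0 := by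
  refine sub_ne_zero.mpr fun h ↦ ?_
  have hnorm : ‖(2 : ℂ) ^ (1 - s)‖ < 1 := by
    rw [← Complex.ofReal_ofNat, Complex.norm_cpow_eq_rpow_re_of_pos two_pos]
    exact Real.rpow_lt_one_of_one_lt_of_neg one_lt_two (by simpa only [Complex.sub_re, Complex.one_re, sub_neg])
  simp [← h] at hnorm

theorem hasSum_neg_one_pow_div_nat_add_one_cpow {s : ℂ} (hs : 1 < s.re) :
    HasSum (fun n : ℕ ↦ (-1) ^ n / ((n : ℂ) + 1) ^ s) ((1 - 2 ^ (1 - s)) * riemannZeta s) := by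
  have hζ := hasSum_one_div_nat_add_one_cpow hs
  have hodd : HasSum (fun k : ℕ ↦ 1 / (((2 * k + 1 : ℕ) : ℂ) + 1) ^ s)
      ((2 : ℂ) ^ (-s) * riemannZeta s) := by
    refine (hζ.mul_left _).congr_fun fun k ↦ ?_
    rw [show ((2 * k + 1 : ℕ) : ℂ) + 1 = ((2 : ℕ) : ℂ) * ((k + 1 : ℕ) : ℂ) by push_cast; ring,
      Complex.natCast_mul_natCast_cpow, Complex.cpow_neg]
    push_cast
    field_simp
  have h2 : (2 : ℂ) ^ (1 - s) = 2 * 2 ^ (-s) := by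
    rw [sub_eq_add_neg, Complex.cpow_add _ _ two_ne_zero, Complex.cpow_one]
  rw [show (1 - 2 ^ (1 - s)) * riemannZeta s = riemannZeta s - 2 * (2 ^ (-s) * riemannZeta s) by
    rw [h2]; ring]
  exact (hζ.neg_one_pow_mul hodd).congr_fun fun n ↦ (mul_one_div _ _).symm

theorem hasse_formula (s : ℂ) (hs : 1 < s.re) :
    riemannZeta s = (1 / (1 - 2 ^ (1 - s))) *
      ∑' n : ℕ, (1 / 2 ^ (n + 1) : ℂ) *
        ∑ k ∈ range (n + 1), (n.choose k : ℂ) * (-1) ^ k / ((k : ℂ) + 1) ^ s := by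
  have hη := hasSum_neg_one_pow_div_nat_add_one_cpow hs
  have hHasse : HasSum (fun n : ℕ ↦ (1 / 2 ^ (n + 1) : ℂ) *
      ∑ k ∈ range (n + 1), (n.choose k : ℂ) * (-1) ^ k / ((k : ℂ) + 1) ^ s)
      ((1 - 2 ^ (1 - s)) * riemannZeta s) := by
    rw [← hη.tsum_eq]
    refine (hasSum_euler_transform (summable_norm_iff.mpr hη.summable)).congr_fun fun n ↦ ?_
    simp only [Complex.real_smul, ← Nat.cast_smul_eq_nsmul ℂ, smul_eq_mul, mul_div_assoc]
    push_cast
    ring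
  rw [hHasse.tsum_eq, one_div, inv_mul_cancel_left₀ (one_sub_two_cpow_one_sub_ne_zero hs)]
end

section
/- For |x| < 1 and μ with 0 < μ ≤ 1, ψ(1+x) + γ = ∑_{n=0}^∞ (μ^n/(μ+1)^{n+1}) ∑_{k=1}^n C(n,k) (x^k/μ^k)(-1)^{k-1} ζ(k+1). -/
/-!
By the Gauss limit `log Γ(s) = lim (s log n + log n! - ∑_{m ≤ n} log (s + m))`, whose derivatives
converge locally uniformly on `s > 0`, one gets `ψ(s) + γ = ∑ₘ (1/(m+1) - 1/(s+m))`.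
At `s = 1 + x` every summand is a geometric series in `x`; the resulting double series converges
absolutely for `|x| < 1`, and summing it the other way gives `ψ(1+x) + γ = ∑ₖ bₖ xᵏ` with
`bₖ = (-1)^(k-1) ζ(k+1)` for `k ≥ 1`.

The right-hand side is the Euler transform of this series. Because
`∑ₙ C(n,k) μⁿ/(μ+1)^(n+1) = μᵏ`, summing the double series `C(n,k) μⁿ/(μ+1)^(n+1) · aₖ/μᵏ`
over `n` first gives back `∑ₖ aₖ`, and the same identity applied to `‖aₖ‖` shows that the
double series converges absolutely as soon as `∑ₖ aₖ` does.
-/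

open Finset

/-- The digamma function `ψ = Γ'/Γ`. -/
noncomputable def digamma (x : ℝ) : ℝ := deriv Real.Gamma x / Real.Gamma x

open Filter Topology Real

theorem hasDerivAt_logGammaSeq {x : ℝ} (hx : 0 < x) (n : ℕ) :
    HasDerivAt (fun y => BohrMollerup.logGammaSeq y n)
      (log n - ∑ m ∈ range (n + 1), (x + m)⁻¹) x := by
  have hlog (m : ℕ) : HasDerivAt (fun y => log (y + m)) (x + m)⁻¹ x := by
    simpa using ((hasDerivAt_id x).add_const (m : ℝ)).log (by positivity)
  have := (((hasDerivAt_id x).mul_const (log n)).add_const (log n.factorial)).fun_sub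
    (HasDerivAt.fun_sum (u := range (n + 1)) fun m _ => hlog m)
  simpa [BohrMollerup.logGammaSeq] using this

theorem abs_inv_nat_add_one_sub_inv_add_le {a b t : ℝ} (ha : 0 < a) (ht : t ∈ Set.Icc a b)
    (m : ℕ) :
    |((m : ℝ) + 1)⁻¹ - (t + m)⁻¹| ≤ (b + 1) * (1 + a) / a * (((m : ℝ) + 1) ^ 2)⁻¹ := by
  obtain ⟨hat, htb⟩ := ht
  have hm : (0 : ℝ) ≤ m := m.cast_nonneg
  have htm : 0 < t + m := by linarith
  have hden : a * ((m : ℝ) + 1) ^ 2 ≤ (1 + a) * (((m : ℝ) + 1) * (t + m)) := by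
    have : a * ((m : ℝ) + 1) ≤ (1 + a) * (t + m) := by nlinarith
    nlinarith
  have hnum : |t - 1| ≤ b + 1 := abs_le.mpr ⟨by linarith, by linarith⟩
  rw [inv_sub_inv (by positivity) htm.ne', abs_div,
    abs_of_pos (show (0 : ℝ) < (m + 1) * (t + m) by positivity),
    show t + m - (m + 1) = t - 1 by ring]
  calc |t - 1| / (((m : ℝ) + 1) * (t + m))
      ≤ (b + 1) / (a * ((m : ℝ) + 1) ^ 2 / (1 + a)) := by
        gcongr
        · linarith
        · rw [div_le_iff₀ (by positivity)]
          linarith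
    _ = (b + 1) * (1 + a) / a * (((m : ℝ) + 1) ^ 2)⁻¹ := by field_simp

theorem tendsto_log_sub_sum_inv_nat_add_one :
    Tendsto (fun n : ℕ => log n - ∑ m ∈ range (n + 1), ((m : ℝ) + 1)⁻¹) atTop
      (𝓝 (-eulerMascheroniConstant)) := by
  have h := tendsto_harmonic_sub_log.neg.sub
    ((tendsto_inv_atTop_nhds_zero_nat (𝕜 := ℝ)).comp (tendsto_add_atTop_nat 1))
  rw [sub_zero] at h
  refine h.congr fun n => ?_
  simp only [Function.comp_apply, harmonic, sum_range_succ]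
  push_cast
  ring

theorem tendstoUniformlyOn_deriv_logGammaSeq {a b : ℝ} (ha : 0 < a) :
    TendstoUniformlyOn (fun (n : ℕ) (t : ℝ) => log n - ∑ m ∈ range (n + 1), (t + m)⁻¹)
      (fun t => -eulerMascheroniConstant + ∑' m : ℕ, (((m : ℝ) + 1)⁻¹ - (t + m)⁻¹)) atTop
      (Set.Icc a b) := by
  have hbound : Summable fun m : ℕ => (b + 1) * (1 + a) / a * (((m : ℝ) + 1) ^ 2)⁻¹ :=
    (by exact_mod_cast (summable_nat_add_iff 1).mpr (Real.summable_nat_pow_inv.mpr one_lt_two) :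
      Summable fun m : ℕ => (((m : ℝ) + 1) ^ 2)⁻¹).mul_left _
  have hsum : TendstoUniformlyOn
      (fun (n : ℕ) (t : ℝ) => ∑ m ∈ range (n + 1), (((m : ℝ) + 1)⁻¹ - (t + m)⁻¹))
      (fun t => ∑' m : ℕ, (((m : ℝ) + 1)⁻¹ - (t + m)⁻¹)) atTop (Set.Icc a b) := fun v hv =>
    (tendsto_add_atTop_nat 1).eventually <| tendstoUniformlyOn_tsum_nat hbound
      (fun m t ht => abs_inv_nat_add_one_sub_inv_add_le ha ht m) v hv
  refine ((tendsto_log_sub_sum_inv_nat_add_one.tendstoUniformlyOn_const _).add hsum).congr ?_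
  filter_upwards with n t _
  simp only [Pi.add_apply, sum_sub_distrib]
  ring

theorem digamma_add_eulerMascheroniConstant {s : ℝ} (hs : 0 < s) :
    digamma s + eulerMascheroniConstant = ∑' m : ℕ, (((m : ℝ) + 1)⁻¹ - (s + m)⁻¹) := by
  have hlogΓ : HasDerivAt (fun t => log (Gamma t))
      (-eulerMascheroniConstant + ∑' m : ℕ, (((m : ℝ) + 1)⁻¹ - (s + m)⁻¹)) s :=
    hasDerivAt_of_tendstoUniformlyOn isOpen_Ioo
      ((tendstoUniformlyOn_deriv_logGammaSeq (half_pos hs) (b := s + 1)).mono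
        Set.Ioo_subset_Icc_self)
      (Eventually.of_forall fun n t ht => hasDerivAt_logGammaSeq (by linarith [ht.1]) n)
      (fun t ht => BohrMollerup.tendsto_log_gamma (by linarith [ht.1]))
      ⟨by linarith, by linarith⟩
  have hΓ : HasDerivAt (fun t => log (Gamma t)) (deriv Gamma s / Gamma s) s :=
    (differentiableAt_Gamma fun m => by linarith [m.cast_nonneg (α := ℝ)]).hasDerivAt.log
      (Gamma_pos_of_pos hs).ne'
  rw [digamma, hΓ.unique hlogΓ]
  ring

theorem hasSum_choose_mul_pow_div_pow_succ {𝕜 : Type*} [NormedField 𝕜] [CompleteSpace 𝕜]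
    {z : 𝕜} (hz : ‖z‖ < ‖z + 1‖) (k : ℕ) :
    HasSum (fun n : ℕ => (n.choose k : 𝕜) * z ^ n / (z + 1) ^ (n + 1)) (z ^ k) := by
  have hz1 : z + 1 ≠ 0 := norm_pos_iff.mp ((norm_nonneg z).trans_lt hz)
  have ht : ‖z / (z + 1)‖ < 1 := by rwa [norm_div, div_lt_one (norm_pos_iff.mpr hz1)]
  have h1t : 1 - z / (z + 1) = (z + 1)⁻¹ := by field_simp; ring
  have h := (hasSum_choose_mul_geometric_of_norm_lt_one k ht).mul_left (z ^ k / (z + 1) ^ (k + 1))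
  rw [h1t, one_div, inv_pow, inv_inv, div_mul_cancel₀ _ (pow_ne_zero _ hz1)] at h
  rw [← hasSum_nat_add_iff' k, sum_eq_zero fun i hi => by
    rw [Nat.choose_eq_zero_of_lt (mem_range.mp hi), Nat.cast_zero, zero_mul, zero_div], sub_zero]
  refine h.congr_fun fun n => ?_
  rw [div_pow]
  field_simp
  ring

theorem hasSum_euler_transform_s13 {μ : ℝ} (hμ : 0 < μ) {b : ℕ → ℂ}
    (hb : Summable fun k => ‖b k‖) :
    HasSum (fun n : ℕ => (μ : ℂ) ^ n / ((μ : ℂ) + 1) ^ (n + 1) *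
      ∑ k ∈ range (n + 1), (n.choose k : ℂ) * (b k / (μ : ℂ) ^ k)) (∑' k, b k) := by
  have hμC : (μ : ℂ) ≠ 0 := by exact_mod_cast hμ.ne'
  have hμR : ‖μ‖ < ‖μ + 1‖ := by
    rw [Real.norm_of_nonneg hμ.le, Real.norm_of_nonneg (by linarith)]; linarith
  have hμC' : ‖(μ : ℂ)‖ < ‖(μ : ℂ) + 1‖ := by exact_mod_cast hμR
  let G : ℕ × ℕ → ℂ := fun p =>
    b p.1 / (μ : ℂ) ^ p.1 * ((p.2.choose p.1 : ℂ) * (μ : ℂ) ^ p.2 / ((μ : ℂ) + 1) ^ (p.2 + 1))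
  have hcol (k : ℕ) : HasSum (fun n => G (k, n)) (b k) := by
    simpa [G, div_mul_cancel₀ _ (pow_ne_zero k hμC)] using
      (hasSum_choose_mul_pow_div_pow_succ hμC' k).mul_left (b k / (μ : ℂ) ^ k)
  have hcol_norm (k : ℕ) : HasSum (fun n => ‖G (k, n)‖) ‖b k‖ := by
    have := (hasSum_choose_mul_pow_div_pow_succ hμR k).mul_left (‖b k‖ / μ ^ k)
    rw [div_mul_cancel₀ _ (pow_ne_zero k hμ.ne')] at this
    refine this.congr_fun fun n => ?_
    have : (μ : ℂ) + 1 = ((μ + 1 : ℝ) : ℂ) := by push_cast; rfl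
    simp only [G, this, norm_mul, norm_div, norm_pow, Complex.norm_real, Complex.norm_natCast,
      Real.norm_of_nonneg hμ.le, Real.norm_of_nonneg (by linarith : 0 ≤ μ + 1)]
  have hG : Summable fun p => ‖G p‖ :=
    (summable_prod_of_nonneg fun _ => norm_nonneg _).2
      ⟨fun k => (hcol_norm k).summable, by simpa only [(hcol_norm _).tsum_eq] using hb⟩
  have hT := hG.of_norm.hasSum
  have hrow (n : ℕ) : HasSum (fun k => G (k, n)) ((μ : ℂ) ^ n / ((μ : ℂ) + 1) ^ (n + 1) *
      ∑ k ∈ range (n + 1), (n.choose k : ℂ) * (b k / (μ : ℂ) ^ k)) := by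
    have hsum : (μ : ℂ) ^ n / ((μ : ℂ) + 1) ^ (n + 1) *
        ∑ k ∈ range (n + 1), (n.choose k : ℂ) * (b k / (μ : ℂ) ^ k) =
          ∑ k ∈ range (n + 1), G (k, n) := by
      rw [mul_sum]
      exact sum_congr rfl fun k _ => by simp only [G]; ring
    rw [hsum]
    exact hasSum_sum_of_ne_finset_zero fun k hk => by
      simp [G, Nat.choose_eq_zero_of_lt (not_lt.mp (mt mem_range.mpr hk))]
  rw [(hT.prod_fiberwise hcol).tsum_eq]
  exact ((Equiv.prodComm ℕ ℕ).hasSum_iff.mpr hT).prod_fiberwise hrow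

theorem hasSum_inv_sub_inv_add {a x : ℂ} (hx : ‖x‖ < ‖a‖) :
    HasSum (fun k : ℕ => (-1) ^ k * x ^ (k + 1) / a ^ (k + 2)) (a⁻¹ - (a + x)⁻¹) := by
  have ha : a ≠ 0 := norm_pos_iff.mp ((norm_nonneg x).trans_lt hx)
  have hax : a + x ≠ 0 := fun h => by
    rw [eq_neg_of_add_eq_zero_right h, norm_neg] at hx; exact lt_irrefl _ hx
  have hr : ‖-x / a‖ < 1 := by rwa [norm_div, norm_neg, div_lt_one (norm_pos_iff.mpr ha)]
  have h := (hasSum_geometric_of_norm_lt_one hr).mul_left (x / a ^ 2)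
  have hval : x / a ^ 2 * (1 - -x / a)⁻¹ = a⁻¹ - (a + x)⁻¹ := by
    rw [show 1 - -x / a = (a + x) / a by field_simp; ring, inv_div]
    field_simp
    ring
  rw [hval] at h
  refine h.congr_fun fun k => ?_
  rw [div_pow, neg_pow]
  field_simp
  ring

theorem hasSum_div_nat_add_one_pow (c : ℂ) {m : ℕ} (hm : 1 < m) :
    HasSum (fun n : ℕ => c / ((n : ℂ) + 1) ^ m) (c * riemannZeta m) := by
  have h := LSeriesHasSum_one (s := m) (by simpa using hm)
  rw [LSeriesHasSum, ← hasSum_nat_add_iff' 1] at h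
  simpa [LSeries.term, div_eq_mul_inv] using h.mul_left c

theorem summable_norm_pow_div_nat_add_one_pow {x : ℂ} (hx : ‖x‖ < 1) :
    Summable fun p : ℕ × ℕ => ‖(-1) ^ p.2 * x ^ (p.2 + 1) / ((p.1 : ℂ) + 1) ^ (p.2 + 2)‖ := by
  have hinv : Summable fun j : ℕ => (((j : ℝ) + 1) ^ 2)⁻¹ := by
    exact_mod_cast (summable_nat_add_iff 1).mpr (Real.summable_nat_pow_inv.mpr one_lt_two)
  have hgeo : Summable fun k : ℕ => ‖x‖ ^ (k + 1) :=
    (summable_geometric_of_lt_one (norm_nonneg x) hx).mul_left ‖x‖ |>.congr fun k => by ring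
  refine Summable.of_nonneg_of_le (fun _ => norm_nonneg _) (fun ⟨j, k⟩ => ?_)
    (hinv.mul_of_nonneg hgeo (fun _ => by positivity) (fun _ => by positivity))
  have hj : (1 : ℝ) ≤ j + 1 := by linarith [j.cast_nonneg (α := ℝ)]
  have : ‖(j : ℂ) + 1‖ = j + 1 := by exact_mod_cast Complex.norm_natCast (j + 1)
  simp only [norm_div, norm_mul, norm_pow, norm_neg, norm_one, one_pow, one_mul, this]
  rw [div_eq_mul_inv, mul_comm]
  gcongr
  omega

theorem hasSum_pow_mul_riemannZeta {x : ℂ} (hx : ‖x‖ < 1) :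
    HasSum (fun k : ℕ => (-1) ^ k * x ^ (k + 1) * riemannZeta (k + 2))
      (∑' j : ℕ, (((j : ℂ) + 1)⁻¹ - ((j : ℂ) + 1 + x)⁻¹)) := by
  have hF := (summable_norm_pow_div_nat_add_one_pow hx).of_norm.hasSum
  have hrow (j : ℕ) := hasSum_inv_sub_inv_add (a := (j : ℂ) + 1) (x := x) <| by
    rw [show (j : ℂ) + 1 = ((j + 1 : ℕ) : ℂ) by push_cast; rfl, Complex.norm_natCast]
    exact hx.trans_le (by simp)
  have hcol (k : ℕ) := hasSum_div_nat_add_one_pow ((-1) ^ k * x ^ (k + 1)) (m := k + 2) (by omega)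
  push_cast at hcol
  rw [(hF.prod_fiberwise hrow).tsum_eq]
  exact ((Equiv.prodComm ℕ ℕ).hasSum_iff.mpr hF).prod_fiberwise hcol

theorem summable_norm_pow_mul_riemannZeta {x : ℂ} (hx : ‖x‖ < 1) :
    Summable fun k : ℕ => ‖(-1) ^ k * x ^ (k + 1) * riemannZeta (k + 2)‖ := by
  have hF := (summable_norm_pow_div_nat_add_one_pow hx).prod_symm
  refine hF.prod.of_nonneg_of_le (fun _ => norm_nonneg _) fun k => ?_
  have hcol := hasSum_div_nat_add_one_pow ((-1) ^ k * x ^ (k + 1)) (m := k + 2) (by omega)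
  push_cast at hcol
  exact hcol.tsum_eq ▸ norm_tsum_le_tsum_norm (hF.prod_factor k)

/-- `riemannZeta 1` is a junk value, not `0`, so the constant coefficient is set explicitly. -/
noncomputable def digammaTaylorCoeff (k : ℕ) : ℂ :=
  if k = 0 then 0 else (-1) ^ (k - 1) * riemannZeta (k + 1)

theorem digammaTaylorCoeff_succ_mul_pow (x : ℂ) (k : ℕ) :
    digammaTaylorCoeff (k + 1) * x ^ (k + 1) = (-1) ^ k * x ^ (k + 1) * riemannZeta (k + 2) := by
  simp only [digammaTaylorCoeff]
  push_cast
  ring_nf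

theorem summable_norm_digammaTaylorCoeff_mul_pow {x : ℂ} (hx : ‖x‖ < 1) :
    Summable fun k => ‖digammaTaylorCoeff k * x ^ k‖ :=
  (summable_nat_add_iff 1).mp <| by
    simpa only [digammaTaylorCoeff_succ_mul_pow] using summable_norm_pow_mul_riemannZeta hx

theorem hasSum_digammaTaylorCoeff_mul_pow {x : ℝ} (hx : |x| < 1) :
    HasSum (fun k => digammaTaylorCoeff k * (x : ℂ) ^ k)
      ((digamma (1 + x) + eulerMascheroniConstant : ℝ) : ℂ) := by
  rw [← hasSum_nat_add_iff' 1, digamma_add_eulerMascheroniConstant (by linarith [abs_lt.mp hx]),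
    Complex.ofReal_tsum]
  simp only [digammaTaylorCoeff_succ_mul_pow, range_one, sum_singleton]
  rw [show digammaTaylorCoeff 0 = 0 from if_pos rfl, zero_mul, sub_zero]
  push_cast
  have hperm (j : ℕ) : 1 + (x : ℂ) + j = j + 1 + x := by ring
  simpa only [hperm] using hasSum_pow_mul_riemannZeta (by rwa [Complex.norm_real, norm_eq_abs])

theorem digamma_param_general (x μ : ℝ) (hx : |x| < 1) (hμ0 : 0 < μ) :
    ((digamma (1 + x) + Real.eulerMascheroniConstant : ℝ) : ℂ) =
      ∑' n : ℕ, (μ : ℂ) ^ n / ((μ : ℂ) + 1) ^ (n + 1) *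
        ∑ k ∈ Icc 1 n, (n.choose k : ℂ) * ((x : ℂ) ^ k / (μ : ℂ) ^ k) *
          (-1) ^ (k - 1) * riemannZeta ((k : ℂ) + 1) := by
  have hxC : ‖(x : ℂ)‖ < 1 := by rwa [Complex.norm_real, norm_eq_abs]
  rw [← (hasSum_digammaTaylorCoeff_mul_pow hx).tsum_eq]
  refine ((hasSum_euler_transform_s13 hμ0 (summable_norm_digammaTaylorCoeff_mul_pow hxC)).congr_fun
    fun n => ?_).tsum_eq.symm
  congr 1
  rw [← sum_subset (fun k hk => mem_range.mpr (Nat.lt_succ_of_le (mem_Icc.mp hk).2))]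
  · refine sum_congr rfl fun k hk => ?_
    simp only [digammaTaylorCoeff, if_neg (Nat.one_le_iff_ne_zero.mp (mem_Icc.mp hk).1)]
    ring
  · intro k hk hk'
    obtain rfl : k = 0 := by simp only [mem_Icc, mem_range] at hk hk'; omega
    simp [digammaTaylorCoeff]

theorem digamma_param (x μ : ℝ) (hx : |x| < 1) (hμ0 : 0 < μ) (hμ1 : μ ≤ 1) :
    ((digamma (1 + x) + Real.eulerMascheroniConstant : ℝ) : ℂ) =
      ∑' n : ℕ, (μ : ℂ) ^ n / ((μ : ℂ) + 1) ^ (n + 1) *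
        ∑ k ∈ Icc 1 n, (n.choose k : ℂ) * ((x : ℂ) ^ k / (μ : ℂ) ^ k) *
          (-1) ^ (k - 1) * riemannZeta ((k : ℂ) + 1) :=
  digamma_param_general x μ hx hμ0
end
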